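/- Let a < b be real numbers, let n = 2m be even, and let g_0,…,g_{n+1} be continuous functions on [a,b] such that both (g_0,…,g_n) and (g_0,…,g_{n+1}) are T_+-systems on [a,b]. Let c ∈ ℝ^{n+1} with M_c ≠ ∅, and let μ_max (respectively μ_min) be a measure in M_c maximizing (respectively minimizing) ∫ g_{n+1} dμ over μ ∈ M_c. Then there exist subsets X_max and X_min of [a,b] such that supp μ_max ⊆ X_max, supp μ_min ⊆ X_min, card X_max = card X_min = m+1, b ∈ X_max, and a ∈ X_min. -/

import Mathlib

open MeasureTheory

/-- `(g_0, …, g_k)` is a T₊-system on `[a, b]`: the determinant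
`det (g_i(x_j))` is strictly positive whenever `a ≤ x_0 < … < x_k ≤ b`. -/
def IsTPlusSystem {k : ℕ} (a b : ℝ) (g : Fin (k + 1) → ℝ → ℝ) : Prop :=
  ∀ x : Fin (k + 1) → ℝ, StrictMono x → (∀ j, x j ∈ Set.Icc a b) →
    0 < (Matrix.of fun i j => g i (x j)).det

/-- `μ` belongs to the moment set `M_c`: it is a finite nonnegative Borel
measure on `[a, b]` (i.e. vanishing outside `[a, b]`) with `∫ g_i dμ = c_i`
for all `i`. -/
def MemMc (a b : ℝ) {n : ℕ} (g : Fin (n + 1) → ℝ → ℝ) (c : Fin (n + 1) → ℝ)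
    (μ : Measure ℝ) : Prop :=
  IsFiniteMeasure μ ∧ μ (Set.Icc a b)ᶜ = 0 ∧ ∀ i, ∫ x, g i x ∂μ = c i

/-- The support of a Borel measure: the set of points all of whose open
neighborhoods have positive measure. -/
def measSupport (μ : Measure ℝ) : Set ℝ :=
  {x | ∀ U : Set ℝ, IsOpen U → x ∈ U → 0 < μ U}

open Filter Topology Metric Set Matrix

/-!
Suppose the maximizer charged `m + 1` points `s₀ < ⋯ < s_m` of `[a, b)`. Interlacing them with
midpoints (the last one taken in `(s_m, b]`) gives `2m + 2` points `u₀ < ⋯ < u_{2m+1}`. The last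
column `w` of the adjugate of `(g_i(u_j))_{i, j ≤ 2m+1}`, `g_{2m+1} = gtop`, is orthogonal to the
rows of `g₀, …, g_{2m}` and pairs with the row of `gtop` to the determinant, which is positive;
its entries are signed minors of the T₊-system `g`, so `w_j < 0` exactly at the support points
`u_{2k} = s_k`. Removing mass `ε |w_j|` near these points and adding `ε w_j δ_{u_j}` at the others
keeps every moment `∫ g_i` and strictly increases `∫ gtop`, a contradiction. As the support points
need not be atoms, the point values `g_i(u_j)` there are replaced by averages over small balls;
these converge, so the signs survive. Hence the maximizer charges at most `m` points besides `b`,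
and symmetrically the minimizer at most `m` points besides `a`; pad to `m + 1` points.
-/

theorem measSupport_subset {μ : Measure ℝ} {K : Set ℝ} (hK : IsClosed K) (hμ : μ Kᶜ = 0) :
    measSupport μ ⊆ K := fun _ hx => by_contra fun hxK =>
  (hx Kᶜ hK.isOpen_compl hxK).ne' hμ

theorem ContinuousOn.integrable_of_measure_compl_eq_zero {μ : Measure ℝ} [IsFiniteMeasure μ]
    {K : Set ℝ} (hK : IsCompact K) (hμ : μ Kᶜ = 0) {f : ℝ → ℝ} (hf : ContinuousOn f K) :
    Integrable f μ := by
  rw [← Measure.restrict_eq_self_of_ae_mem (ae_iff.2 hμ)]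
  exact hf.integrableOn_compact hK

theorem tendsto_setAverage_ball {μ : Measure ℝ} [IsFiniteMeasure μ] {K : Set ℝ}
    (hμ : μ Kᶜ = 0) {f : ℝ → ℝ} (hf : ContinuousOn f K) (hfi : Integrable f μ) {s : ℝ}
    (hs : s ∈ K) (hsupp : s ∈ measSupport μ) :
    Tendsto (fun r => ⨍ x in ball s r, f x ∂μ) (𝓝[>] 0) (𝓝 (f s)) := by
  rw [Metric.tendsto_nhds]
  intro ε hε
  obtain ⟨δ, hδ, hfδ⟩ := Metric.continuousWithinAt_iff.1 (hf s hs) (ε / 2) (half_pos hε)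
  filter_upwards [Ioo_mem_nhdsGT hδ] with r ⟨hr, hrδ⟩
  have hclose : ∀ᵐ x ∂μ.restrict (ball s r), f x ∈ closedBall (f s) (ε / 2) := by
    filter_upwards [ae_restrict_of_ae (ae_iff.2 hμ), ae_restrict_mem measurableSet_ball]
      with x hxK hxs
    exact (hfδ hxK (lt_trans hxs hrδ)).le
  have hmem := (convex_closedBall (f s) (ε / 2)).set_average_mem isClosed_closedBall
    (hsupp _ isOpen_ball (mem_ball_self hr)).ne' (measure_ne_top _ _) hclose hfi.integrableOn
  exact (mem_closedBall.1 hmem).trans_lt (half_lt_self hε)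

theorem integral_compl_biUnion_finset {α ι : Type*} [MeasurableSpace α] {μ : Measure α}
    (R : Finset ι) {V : ι → Set α} (hVm : ∀ j ∈ R, MeasurableSet (V j))
    (hVd : (R : Set ι).PairwiseDisjoint V) {f : α → ℝ} (hf : Integrable f μ) :
    ∫ x in (⋃ j ∈ R, V j)ᶜ, f x ∂μ = ∫ x, f x ∂μ - ∑ j ∈ R, ∫ x in V j, f x ∂μ := by
  rw [← integral_biUnion_finset R hVm hVd fun j _ => hf.integrableOn,
    ← integral_add_compl (Finset.measurableSet_biUnion R hVm) hf]
  ring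

theorem exists_measure_integral_eq_add_sum {α ι : Type*} [MeasurableSpace α]
    [MeasurableSingletonClass α] [Fintype ι] [DecidableEq ι] {μ : Measure α}
    [IsFiniteMeasure μ] {S : Set α} (hμ : μ Sᶜ = 0) (R : Finset ι) {V : ι → Set α}
    (hVm : ∀ j ∈ R, MeasurableSet (V j)) (hVd : (R : Set ι).PairwiseDisjoint V)
    {p : ι → α} (hp : ∀ j ∉ R, p j ∈ S) {w : ι → ℝ}
    (hw : ∀ j ∉ R, 0 ≤ w j) :
    ∃ ε > 0, ∃ ν : Measure α, IsFiniteMeasure ν ∧ ν Sᶜ = 0 ∧ ∀ f : α → ℝ, Integrable f μ →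
      ∫ x, f x ∂ν = ∫ x, f x ∂μ +
        ε * ∑ j, w j * (if j ∈ R then ⨍ x in V j, f x ∂μ else f (p j)) := by
  have hsmall : ∀ᶠ ε in 𝓝[>] (0 : ℝ), ∀ j ∈ R, 0 ≤ 1 + ε * w j / μ.real (V j) := by
    refine (eventually_all_finset R).2 fun j _ => nhdsWithin_le_nhds ?_
    have : Tendsto (fun ε : ℝ => 1 + ε * w j / μ.real (V j)) (𝓝 0) (𝓝 1) :=
      Continuous.tendsto' (by fun_prop) 0 1 (by simp)
    exact this.eventually (eventually_ge_nhds zero_lt_one)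
  obtain ⟨ε, hε, hεR⟩ := (eventually_mem_nhdsWithin.and hsmall).exists
  refine ⟨ε, hε, μ.restrict (⋃ j ∈ R, V j)ᶜ
      + ∑ j ∈ R, (1 + ε * w j / μ.real (V j)).toNNReal • μ.restrict (V j)
      + ∑ j ∈ Rᶜ, (ε * w j).toNNReal • Measure.dirac (p j), inferInstance, ?_, fun f hf => ?_⟩
  · have hres : ∀ s, μ.restrict s Sᶜ = 0 := fun s =>
      nonpos_iff_eq_zero.1 (hμ ▸ Measure.restrict_apply_le s Sᶜ)
    simpa [Measure.dirac_apply, hres] using fun j hj => Or.inr (hp j hj)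
  · have hVterm : ∀ j ∈ R, ∫ x, f x ∂((1 + ε * w j / μ.real (V j)).toNNReal • μ.restrict (V j))
        = ∫ x in V j, f x ∂μ + ε * (w j * ⨍ x in V j, f x ∂μ) := fun j hj => by
      rw [integral_smul_nnreal_measure, NNReal.smul_def, Real.coe_toNNReal _ (hεR j hj),
        setAverage_eq, smul_eq_mul, smul_eq_mul]
      ring
    have hpterm : ∀ j ∈ Rᶜ, ∫ x, f x ∂((ε * w j).toNNReal • Measure.dirac (p j))
        = ε * (w j * f (p j)) := fun j hj => by
      rw [integral_smul_nnreal_measure, NNReal.smul_def, integral_dirac, smul_eq_mul,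
        Real.coe_toNNReal _ (mul_nonneg hε.le (hw j (Finset.mem_compl.1 hj)))]
      ring
    have hsplit : ∑ j, w j * (if j ∈ R then ⨍ x in V j, f x ∂μ else f (p j))
        = ∑ j ∈ R, w j * ⨍ x in V j, f x ∂μ + ∑ j ∈ Rᶜ, w j * f (p j) := by
      rw [← Finset.sum_add_sum_compl R]
      congr 1 <;> refine Finset.sum_congr rfl fun j hj => ?_
      · rw [if_pos hj]
      · rw [if_neg (Finset.mem_compl.1 hj)]
    have hiV : ∀ j ∈ R, Integrable f ((1 + ε * w j / μ.real (V j)).toNNReal • μ.restrict (V j)) :=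
      fun j _ => hf.restrict.smul_measure_nnreal
    have hip : ∀ j ∈ Rᶜ, Integrable f ((ε * w j).toNNReal • Measure.dirac (p j)) :=
      fun j _ => (integrable_dirac enorm_lt_top).smul_measure_nnreal
    rw [integral_add_measure (hf.restrict.add_measure (integrable_finsetSum_measure.2 hiV))
        (integrable_finsetSum_measure.2 hip),
      integral_add_measure hf.restrict (integrable_finsetSum_measure.2 hiV),
      integral_finsetSum_measure hiV, integral_finsetSum_measure hip,
      integral_compl_biUnion_finset R hVm hVd hf, Finset.sum_congr rfl hVterm,
      Finset.sum_congr rfl hpterm, hsplit, Finset.sum_add_distrib, mul_add, Finset.mul_sum,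
      Finset.mul_sum]
    ring

theorem eventually_pairwise_disjoint_ball {ι X : Type*} [Finite ι] [MetricSpace X] {u : ι → X}
    (hu : Function.Injective u) :
    ∀ᶠ r in 𝓝 (0 : ℝ), Pairwise fun j j' => Disjoint (ball (u j) r) (ball (u j') r) := by
  refine eventually_all.2 fun j => eventually_all.2 fun j' => ?_
  by_cases h : j = j'
  · exact Eventually.of_forall fun r h' => (h' h).elim
  · filter_upwards [eventually_lt_nhds (half_pos (dist_pos.2 (hu.ne h)))] with r hr _
    exact ball_disjoint_ball (by linarith)

theorem Matrix.sum_mul_adjugate_apply {n R : Type*} [Fintype n] [DecidableEq n] [CommRing R]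
    (A : Matrix n n R) (i k : n) : ∑ j, A i j * adjugate A j k = if i = k then A.det else 0 := by
  simpa [mul_apply, one_apply] using congrFun₂ (mul_adjugate A) i k

theorem exists_measure_perturbation {K : Set ℝ} (hK : IsCompact K) {n : ℕ}
    {G : Fin (n + 1) → ℝ → ℝ} (hG : ∀ i, ContinuousOn (G i) K) {μ : Measure ℝ}
    [IsFiniteMeasure μ] (hμ : μ Kᶜ = 0) {u : Fin (n + 1) → ℝ} (hu : Function.Injective u)
    (huK : ∀ j, u j ∈ K) {ρ : ℝ} (hdet : ρ * (of fun i j => G i (u j)).det ≠ 0)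
    (hsupp : ∀ j, u j ∈ measSupport μ ∨ 0 < ρ * adjugate (of fun i j => G i (u j)) j (Fin.last n)) :
    ∃ ν : Measure ℝ, IsFiniteMeasure ν ∧ ν Kᶜ = 0 ∧
      (∀ i : Fin n, ∫ x, G i.castSucc x ∂ν = ∫ x, G i.castSucc x ∂μ) ∧
      0 < ρ * (of fun i j => G i (u j)).det *
        (∫ x, G (Fin.last n) x ∂ν - ∫ x, G (Fin.last n) x ∂μ) := by
  classical
  set M₀ : Matrix (Fin (n + 1)) (Fin (n + 1)) ℝ := of fun i j => G i (u j)
  set R : Finset (Fin (n + 1)) := {j | u j ∈ measSupport μ}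
  have hGi : ∀ i, Integrable (G i) μ := fun i =>
    (hG i).integrable_of_measure_compl_eq_zero hK hμ
  let M : ℝ → Matrix (Fin (n + 1)) (Fin (n + 1)) ℝ := fun r =>
    of fun i j => if j ∈ R then ⨍ x in ball (u j) r, G i x ∂μ else G i (u j)
  have hM : Tendsto M (𝓝[>] 0) (𝓝 M₀) := by
    refine tendsto_pi_nhds.2 fun i => tendsto_pi_nhds.2 fun j => ?_
    by_cases hj : j ∈ R
    · simpa [M, hj, M₀] using
        tendsto_setAverage_ball hμ (hG i) (hGi i) (huK j) (by simpa [R] using hj)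
    · simp [M, hj, M₀]
  have hw : ∀ᶠ r in 𝓝[>] 0, ∀ j ∈ Rᶜ, 0 < ρ * adjugate (M r) j (Fin.last n) :=
    (eventually_all_finset _).2 fun j hj =>
      ((((continuous_id.matrix_adjugate.tendsto M₀).comp hM).apply_nhds j).apply_nhds (Fin.last n)
        |>.const_mul ρ).eventually_const_lt ((hsupp j).resolve_left (by simpa [R] using hj))
  have hdetM : ∀ᶠ r in 𝓝[>] 0, 0 < ρ * M₀.det * (ρ * (M r).det) :=
    ((((continuous_id.matrix_det.tendsto M₀).comp hM).const_mul ρ).const_mul _).eventually_const_lt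
      (mul_self_pos.2 hdet)
  obtain ⟨r, hr, hdisj, hw, hdetM⟩ :=
    (eventually_mem_nhdsWithin.and
      (((eventually_pairwise_disjoint_ball hu).filter_mono nhdsWithin_le_nhds).and
        (hw.and hdetM))).exists
  obtain ⟨ε, hε, ν, hνfin, hνK, hν⟩ := exists_measure_integral_eq_add_sum hμ R
    (V := fun j => ball (u j) r) (fun _ _ => measurableSet_ball) (fun j _ j' _ h => hdisj h)
    (p := u) (fun j _ => huK j) (w := fun j => ρ * adjugate (M r) j (Fin.last n))
    (fun j hj => (hw j (Finset.mem_compl.2 hj)).le)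
  have hsum : ∀ i, ∑ j, ρ * adjugate (M r) j (Fin.last n) *
      (if j ∈ R then ⨍ x in ball (u j) r, G i x ∂μ else G i (u j)) =
        ρ * if i = Fin.last n then (M r).det else 0 := fun i => by
    rw [← sum_mul_adjugate_apply, Finset.mul_sum]
    exact Finset.sum_congr rfl fun j _ => by simp only [M, of_apply]; ring
  refine ⟨ν, hνfin, hνK, fun i => ?_, ?_⟩
  · rw [hν _ (hGi _), hsum, if_neg (Fin.castSucc_lt_last i).ne]
    simp
  · rw [hν _ (hGi _), hsum, if_pos rfl, add_sub_cancel_left]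
    have : ρ * M₀.det * (ε * (ρ * (M r).det)) = ε * (ρ * M₀.det * (ρ * (M r).det)) := by ring
    exact this ▸ mul_pos hε hdetM

theorem exists_memMc_perturbation {a b : ℝ} {k : ℕ} {g : Fin (k + 1) → ℝ → ℝ} {gtop : ℝ → ℝ}
    (hg : ∀ i, ContinuousOn (g i) (Icc a b)) (hgtop : ContinuousOn gtop (Icc a b))
    (hT : IsTPlusSystem a b g) (hT' : IsTPlusSystem a b (Fin.snoc g gtop))
    {c : Fin (k + 1) → ℝ} {μ : Measure ℝ} (hμ : MemMc a b g c μ) {u : Fin (k + 2) → ℝ}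
    (hu : StrictMono u) (huI : ∀ j, u j ∈ Icc a b) {ρ : ℝ} (hρ : ρ ≠ 0)
    (hsupp : ∀ j : Fin (k + 2), u j ∈ measSupport μ ∨ 0 < ρ * (-1) ^ (k + 1 + (j : ℕ))) :
    ∃ ν, MemMc a b g c ν ∧ 0 < ρ * (∫ x, gtop x ∂ν - ∫ x, gtop x ∂μ) := by
  obtain ⟨hfin, hnull, hmom⟩ := hμ
  set M₀ : Matrix (Fin (k + 2)) (Fin (k + 2)) ℝ :=
    of fun i j => (Fin.snoc g gtop : Fin (k + 2) → ℝ → ℝ) i (u j)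
  have hdet : 0 < M₀.det := hT' u hu huI
  -- `adjugate M₀ j (Fin.last _)` is `(-1) ^ (k + 1 + j)` times a T₊-determinant of `g`
  have hadj (j : Fin (k + 2)) :
      0 < (-1) ^ (k + 1 + (j : ℕ)) * adjugate M₀ j (Fin.last (k + 1)) := by
    rw [adjugate_fin_succ_eq_det_submatrix, Fin.succAbove_last, ← mul_assoc, ← pow_add,
      Fin.val_last, Even.neg_one_pow ⟨_, rfl⟩, one_mul]
    simpa [M₀, submatrix] using hT _ (hu.comp (Fin.strictMono_succAbove j)) fun _ => huI _
  obtain ⟨ν, hνfin, hνnull, hνmom, hνtop⟩ := exists_measure_perturbation isCompact_Icc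
    (G := Fin.snoc g gtop) (Fin.lastCases (by simpa using hgtop) fun i => by simpa using hg i)
    hnull hu.injective huI (mul_ne_zero hρ hdet.ne') fun j => (hsupp j).imp_right fun h => by
      have hsq : ((-1 : ℝ) ^ (k + 1 + (j : ℕ))) ^ 2 = 1 := by rw [← pow_mul, pow_mul']; simp
      nlinarith [hadj j]
  refine ⟨ν, ⟨hνfin, hνnull, fun i => by simpa [hmom] using hνmom i⟩, ?_⟩
  simp only [Fin.snoc_last] at hνtop
  nlinarith

section midpointInterlace

variable {α : Type*} [Field α] {m : ℕ}

/-- `x₀, (x₀ + x₁)/2, x₁, …, (x_m + x_{m+1})/2, x_{m+1}`. -/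
def midpointInterlace (x : Fin (m + 2) → α) (j : Fin (2 * m + 3)) : α :=
  (x ⟨j / 2, by omega⟩ + x ⟨(j + 1) / 2, by omega⟩) / 2

variable [LinearOrder α] [IsStrictOrderedRing α]

theorem midpointInterlace_strictMono {x : Fin (m + 2) → α} (hx : StrictMono x) :
    StrictMono (midpointInterlace x) := fun j j' h => by
  have h₁ : x ⟨j / 2, by omega⟩ < x ⟨(j' + 1) / 2, by omega⟩ := hx (Fin.mk_lt_mk.2 (by omega))
  have h₂ : x ⟨(j + 1) / 2, by omega⟩ ≤ x ⟨j' / 2, by omega⟩ :=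
    hx.monotone (Fin.mk_le_mk.2 (by omega))
  simp only [midpointInterlace]
  linarith

theorem midpointInterlace_mem_Icc {x : Fin (m + 2) → α} {a b : α} (hx : ∀ k, x k ∈ Icc a b)
    (j : Fin (2 * m + 3)) : midpointInterlace x j ∈ Icc a b := by
  have h₁ := hx ⟨j / 2, by omega⟩
  have h₂ := hx ⟨(j + 1) / 2, by omega⟩
  simp only [mem_Icc, midpointInterlace] at *
  constructor <;> linarith

theorem midpointInterlace_of_even (x : Fin (m + 2) → α) {j : Fin (2 * m + 3)} (hj : Even (j : ℕ)) :
    midpointInterlace x j = x ⟨j / 2, by omega⟩ := by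
  obtain ⟨r, hr⟩ := hj
  have : ((j : ℕ) + 1) / 2 = j / 2 := by omega
  simp only [midpointInterlace, this, add_self_div_two]

end midpointInterlace

theorem exists_finset_subset_card_eq_succ {α : Type*} {s : Set α} {m : ℕ}
    (h : (m : ℕ∞) < s.encard) : ∃ F : Finset α, ↑F ⊆ s ∧ F.card = m + 1 := by
  obtain ⟨t, hts, ht⟩ := exists_subset_encard_eq (Order.add_one_le_of_lt h)
  obtain ⟨F, rfl⟩ := (finite_of_encard_eq_coe (k := m + 1) (by simpa using ht)).exists_finset_coe
  exact ⟨F, hts, by exact_mod_cast ht⟩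

theorem exists_finset_superset_card_eq {α : Type*} {s t : Set α} (ht : t.Infinite) (hst : s ⊆ t)
    {n : ℕ} (hs : s.encard ≤ n) : ∃ X : Finset α, s ⊆ X ∧ ↑X ⊆ t ∧ X.card = n := by
  obtain ⟨r, hsr, hrt, hr⟩ := exists_superset_subset_encard_eq hst hs (by simp [ht.encard_eq])
  obtain ⟨X, rfl⟩ := (finite_of_encard_eq_coe hr).exists_finset_coe
  exact ⟨X, hsr, hrt, by exact_mod_cast hr⟩

theorem encard_measSupport_inter_Ico_le {a b : ℝ} {m : ℕ} {g : Fin (2 * m + 1) → ℝ → ℝ}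
    {gtop : ℝ → ℝ} (hg : ∀ i, ContinuousOn (g i) (Icc a b)) (hgtop : ContinuousOn gtop (Icc a b))
    (hT : IsTPlusSystem a b g) (hT' : IsTPlusSystem a b (Fin.snoc g gtop))
    {c : Fin (2 * m + 1) → ℝ} {μ : Measure ℝ} (hμ : MemMc a b g c μ)
    (hmax : ∀ ν, MemMc a b g c ν → ∫ x, gtop x ∂ν ≤ ∫ x, gtop x ∂μ) :
    (measSupport μ ∩ Ico a b).encard ≤ m := by
  classical
  by_contra! h
  obtain ⟨F, hts, hFcard⟩ := exists_finset_subset_card_eq_succ h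
  have hF : (insert b F).card = m + 2 := by
    rw [Finset.card_insert_of_notMem fun hb => (hts hb).2.2.ne rfl, hFcard]
  have hab : a ≤ b := by
    obtain ⟨s, hs⟩ : F.Nonempty := Finset.card_pos.1 (by omega)
    exact (hts hs).2.1.trans (hts hs).2.2.le
  set x := (insert b F).orderEmbOfFin hF
  have hxI : ∀ k, x k ∈ Icc a b := fun k => by
    rcases Finset.mem_insert.1 ((insert b F).orderEmbOfFin_mem hF k) with hk | hk
    · rw [hk]; exact right_mem_Icc.2 hab
    · exact Ico_subset_Icc_self (hts hk).2
  have hxS : ∀ k, k ≠ Fin.last _ → x k ∈ measSupport μ := fun k hk => by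
    have hxb : x k < b := (x.strictMono (Fin.lt_last_iff_ne_last.2 hk)).trans_le (hxI _).2
    exact (hts (Finset.mem_of_mem_insert_of_ne ((insert b F).orderEmbOfFin_mem hF k) hxb.ne)).1
  obtain ⟨ν, hν, hgt⟩ := exists_memMc_perturbation hg hgtop hT hT' hμ
    ((midpointInterlace_strictMono x.strictMono).comp Fin.strictMono_castSucc)
    (fun j => midpointInterlace_mem_Icc hxI _) one_ne_zero fun j => by
      rcases Nat.even_or_odd j with hj | hj
      · left
        simp only [Function.comp_apply, midpointInterlace_of_even x (j := j.castSucc) hj]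
        exact hxS _ (Fin.ne_of_val_ne (by simp; omega))
      · right
        rw [one_mul, ((odd_two_mul_add_one m).add_odd hj).neg_one_pow]
        exact one_pos
  linarith [hmax ν hν]

theorem encard_measSupport_inter_Ioc_le {a b : ℝ} {m : ℕ} {g : Fin (2 * m + 1) → ℝ → ℝ}
    {gtop : ℝ → ℝ} (hg : ∀ i, ContinuousOn (g i) (Icc a b)) (hgtop : ContinuousOn gtop (Icc a b))
    (hT : IsTPlusSystem a b g) (hT' : IsTPlusSystem a b (Fin.snoc g gtop))
    {c : Fin (2 * m + 1) → ℝ} {μ : Measure ℝ} (hμ : MemMc a b g c μ)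
    (hmin : ∀ ν, MemMc a b g c ν → ∫ x, gtop x ∂μ ≤ ∫ x, gtop x ∂ν) :
    (measSupport μ ∩ Ioc a b).encard ≤ m := by
  classical
  by_contra! h
  obtain ⟨F, hts, hFcard⟩ := exists_finset_subset_card_eq_succ h
  have hF : (insert a F).card = m + 2 := by
    rw [Finset.card_insert_of_notMem fun ha => (hts ha).2.1.ne rfl, hFcard]
  have hab : a ≤ b := by
    obtain ⟨s, hs⟩ : F.Nonempty := Finset.card_pos.1 (by omega)
    exact (hts hs).2.1.le.trans (hts hs).2.2
  set x := (insert a F).orderEmbOfFin hF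
  have hxI : ∀ k, x k ∈ Icc a b := fun k => by
    rcases Finset.mem_insert.1 ((insert a F).orderEmbOfFin_mem hF k) with hk | hk
    · rw [hk]; exact left_mem_Icc.2 hab
    · exact Ioc_subset_Icc_self (hts hk).2
  have hxS : ∀ k, k ≠ 0 → x k ∈ measSupport μ := fun k hk => by
    have hax : a < x k := (hxI _).1.trans_lt (x.strictMono (Fin.pos_iff_ne_zero.2 hk))
    exact (hts (Finset.mem_of_mem_insert_of_ne ((insert a F).orderEmbOfFin_mem hF k) hax.ne')).1
  obtain ⟨ν, hν, hlt⟩ := exists_memMc_perturbation hg hgtop hT hT' hμ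
    ((midpointInterlace_strictMono x.strictMono).comp (Fin.strictMono_succ))
    (fun j => midpointInterlace_mem_Icc hxI _) (neg_ne_zero.2 one_ne_zero) fun j => by
      rcases Nat.even_or_odd j with hj | hj
      · right
        rw [((odd_two_mul_add_one m).add_even hj).neg_one_pow]
        norm_num
      · left
        simp only [Function.comp_apply,
          midpointInterlace_of_even x (j := j.succ) (by simpa using hj.add_one)]
        exact hxS _ (Fin.ne_of_val_ne (by simp; rintro rfl; simp at hj))
  linarith [hmin ν hν]

/-- The even case `n = 2m` of the localization of the extremal measures: the
supports of the maximizer and the minimizer of `∫ g_{n+1} dμ` over `M_c` are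
contained in sets `X_max ∋ b` and `X_min ∋ a` of cardinality `m + 1`. -/
theorem tplus_extremal_support_even (a b : ℝ) (hab : a < b) (m : ℕ)
    (g : Fin (2 * m + 1) → ℝ → ℝ) (gtop : ℝ → ℝ)
    (hg : ∀ i, ContinuousOn (g i) (Set.Icc a b))
    (hgtop : ContinuousOn gtop (Set.Icc a b))
    (hT : IsTPlusSystem a b g)
    (hT' : IsTPlusSystem a b (Fin.snoc g gtop))
    (c : Fin (2 * m + 1) → ℝ)
    (μmax μmin : Measure ℝ)
    (hμmax : MemMc a b g c μmax) (hμmin : MemMc a b g c μmin)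
    (hmax : ∀ μ : Measure ℝ, MemMc a b g c μ → ∫ x, gtop x ∂μ ≤ ∫ x, gtop x ∂μmax)
    (hmin : ∀ μ : Measure ℝ, MemMc a b g c μ → ∫ x, gtop x ∂μmin ≤ ∫ x, gtop x ∂μ) :
    ∃ Xmax Xmin : Finset ℝ,
      ↑Xmax ⊆ Set.Icc a b ∧ ↑Xmin ⊆ Set.Icc a b ∧
      measSupport μmax ⊆ ↑Xmax ∧ measSupport μmin ⊆ ↑Xmin ∧
      Xmax.card = m + 1 ∧ Xmin.card = m + 1 ∧ b ∈ Xmax ∧ a ∈ Xmin := by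
  obtain ⟨Xmax, hWmax, hXmax, hcard_max⟩ := exists_finset_superset_card_eq (Icc_infinite hab)
    (insert_subset (right_mem_Icc.2 hab.le) (inter_subset_right.trans Ico_subset_Icc_self))
    ((encard_insert_le _ _).trans
      (add_le_add_left (encard_measSupport_inter_Ico_le hg hgtop hT hT' hμmax hmax) 1))
  obtain ⟨Xmin, hWmin, hXmin, hcard_min⟩ := exists_finset_superset_card_eq (Icc_infinite hab)
    (insert_subset (left_mem_Icc.2 hab.le) (inter_subset_right.trans Ioc_subset_Icc_self))
    ((encard_insert_le _ _).trans
      (add_le_add_left (encard_measSupport_inter_Ioc_le hg hgtop hT hT' hμmin hmin) 1))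
  refine ⟨Xmax, Xmin, hXmax, hXmin, fun x hx => hWmax ?_, fun x hx => hWmin ?_, hcard_max,
    hcard_min, hWmax (mem_insert _ _), hWmin (mem_insert _ _)⟩
  · obtain ⟨hax, hxb⟩ := measSupport_subset isClosed_Icc hμmax.2.1 hx
    rcases hxb.eq_or_lt with rfl | hxb
    exacts [mem_insert _ _, mem_insert_of_mem _ ⟨hx, hax, hxb⟩]
  · obtain ⟨hax, hxb⟩ := measSupport_subset isClosed_Icc hμmin.2.1 hx
    rcases hax.eq_or_lt with rfl | hax
    exacts [mem_insert _ _, mem_insert_of_mem _ ⟨hx, hax, hxb⟩]
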